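/- In the recurrence p_m(t+1) = ((N-2t-m)/(N-2t))·p_m(t) + ((m+1)/(N-2t))·p_{m+1}(t), the generating function F(t,z) = Σ_m p_m(t)·z^m satisfies F(t+1,z) = F(t,z) - ((z-1)/(N-2t))·∂F/∂z(t,z); consequently, since the polynomials (z-1)^k are eigenvectors of this operator with eigenvalues 1 - k/(N-2t), F(t,z) = Σ_{i=0}^{M} C(M,i)·(z-1)^i·((N-2t)!!/N!!)·((N-i)!!/(N-2t-i)!!) under the initial condition F(0,z) = z^M. -/

import Mathlib

/-- Double factorial: 0!! = 1, 1!! = 1, n!! = n·(n-2)!!. -/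
def dfact : ℕ → ℕ
  | 0 => 1
  | 1 => 1
  | n + 2 => (n + 2) * dfact n

/-- The pure death process of the Mafia game: p_m(0) = δ_{mM} and
    p_m(t+1) = ((N-2t-m)/(N-2t))·p_m(t) + ((m+1)/(N-2t))·p_{m+1}(t). -/
def deathP (N M : ℕ) : ℕ → ℕ → ℚ
  | 0, m => if m = M then 1 else 0
  | t + 1, m =>
      ((N : ℚ) - 2 * t - m) / ((N : ℚ) - 2 * t) * deathP N M t m
        + ((m : ℚ) + 1) / ((N : ℚ) - 2 * t) * deathP N M t (m + 1)

open Polynomial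

/-- Generating function of the death process: F(t,z) = Σ_m p_m(t)·z^m. -/
noncomputable def genF (N M : ℕ) (t : ℕ) : Polynomial ℚ :=
  ∑ m ∈ Finset.range (M + 1), Polynomial.C (deathP N M t m) * Polynomial.X ^ m

lemma dfact_pos : ∀ n, 0 < dfact n
  | 0 => by simp [dfact]
  | 1 => by simp [dfact]
  | n + 2 => by rw [dfact]; exact Nat.mul_pos (Nat.succ_pos _) (dfact_pos n)

lemma deathP_of_gt (N M : ℕ) : ∀ t m, M < m → deathP N M t m = 0
  | 0, m, h => by simp [deathP, Nat.ne_of_gt h]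
  | t + 1, m, h => by
      rw [deathP, deathP_of_gt N M t m h, deathP_of_gt N M t (m + 1) (by omega)]
      ring

lemma coeff_genF (N M t n : ℕ) : (genF N M t).coeff n = deathP N M t n := by
  rw [genF, Polynomial.finset_sum_coeff]
  simp only [Polynomial.coeff_C_mul, Polynomial.coeff_X_pow, mul_ite, mul_one, mul_zero]
  rw [Finset.sum_ite_eq (Finset.range (M + 1)) n (fun m => deathP N M t m)]
  by_cases h : n ∈ Finset.range (M + 1)
  · simp [h]
  · rw [if_neg h, deathP_of_gt N M t n (by simpa using h)]

theorem stmt_19 (N M : ℕ) (hMN : M ≤ N) :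
    -- the polynomials (z-1)^k are eigenvectors of the operator
    -- G ↦ G - ((z-1)/(N-2t))·∂G/∂z, with eigenvalues 1 - k/(N-2t):
    (∀ k t : ℕ, ((X - 1 : Polynomial ℚ) ^ k -
        Polynomial.C (1 / ((N : ℚ) - 2 * t)) * (X - 1) *
          Polynomial.derivative ((X - 1 : Polynomial ℚ) ^ k)) =
        Polynomial.C (1 - (k : ℚ) / ((N : ℚ) - 2 * t)) * (X - 1) ^ k) ∧
    -- the initial condition: F(0,z) = z^M
    (genF N M 0 = X ^ M) ∧
    -- the recurrence: F(t+1,z) = F(t,z) - ((z-1)/(N-2t))·∂F/∂z(t,z)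
    (∀ t : ℕ, 2 * (t + 1) + M ≤ N →
      genF N M (t + 1) = genF N M t -
        Polynomial.C (1 / ((N : ℚ) - 2 * t)) * (X - 1) *
          Polynomial.derivative (genF N M t)) ∧
    -- consequently the closed form:
    (∀ t : ℕ, 2 * t + M ≤ N →
      genF N M t = ∑ i ∈ Finset.range (M + 1),
        Polynomial.C ((M.choose i : ℚ) * ((dfact (N - 2 * t) : ℚ) / (dfact N : ℚ)) *
          ((dfact (N - i) : ℚ) / (dfact (N - 2 * t - i) : ℚ))) * (X - 1) ^ i) := by
  have h1 : ∀ k t : ℕ, ((X - 1 : Polynomial ℚ) ^ k -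
        Polynomial.C (1 / ((N : ℚ) - 2 * t)) * (X - 1) *
          Polynomial.derivative ((X - 1 : Polynomial ℚ) ^ k)) =
        Polynomial.C (1 - (k : ℚ) / ((N : ℚ) - 2 * t)) * (X - 1) ^ k := by
    intro k t
    cases k with
    | zero => simp
    | succ k =>
      rw [Polynomial.derivative_pow]
      simp only [Polynomial.derivative_sub, Polynomial.derivative_X, Polynomial.derivative_one,
        sub_zero, mul_one, Nat.cast_add, Nat.cast_one, Nat.add_sub_cancel]
      have : (1 - ((k : ℚ) + 1) / ((N : ℚ) - 2 * t)) =
          1 - ((k : ℚ) + 1) * (1 / ((N : ℚ) - 2 * t)) := by ring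
      rw [this, map_sub, map_mul, map_one]
      ring
  have h2 : genF N M 0 = (X : Polynomial ℚ) ^ M := by
    ext n
    rw [coeff_genF, Polynomial.coeff_X_pow, deathP]
  have h3 : ∀ t : ℕ, 2 * (t + 1) + M ≤ N →
      genF N M (t + 1) = genF N M t -
        Polynomial.C (1 / ((N : ℚ) - 2 * t)) * (X - 1) *
          Polynomial.derivative (genF N M t) := by
    intro t ht
    have hs : ((N : ℚ) - 2 * t) ≠ 0 := by
      have h2t : (2 * t + 2 : ℕ) ≤ N := by omega
      have : ((2 * t + 2 : ℕ) : ℚ) ≤ (N : ℚ) := by exact_mod_cast h2t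
      push_cast at this
      intro h; rw [sub_eq_zero] at h; linarith
    ext n
    rw [coeff_genF, deathP, Polynomial.coeff_sub, coeff_genF]
    have hkey : (Polynomial.C (1 / ((N : ℚ) - 2 * t)) * (X - 1) *
        Polynomial.derivative (genF N M t)).coeff n
        = (1 / ((N : ℚ) - 2 * t)) *
          ((n : ℚ) * deathP N M t n - ((n : ℚ) + 1) * deathP N M t (n + 1)) := by
      rw [mul_assoc, Polynomial.coeff_C_mul, sub_mul, one_mul, Polynomial.coeff_sub]
      congr 1
      cases n with
      | zero =>
        simp [Polynomial.coeff_derivative, coeff_genF]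
      | succ n =>
        rw [Polynomial.coeff_X_mul, Polynomial.coeff_derivative, coeff_genF,
          Polynomial.coeff_derivative, coeff_genF]
        push_cast
        ring
    rw [hkey]
    field_simp
    ring
  refine ⟨h1, h2, h3, ?_⟩
  intro t
  induction t with
  | zero =>
    intro _
    rw [h2]
    have : (X : Polynomial ℚ) ^ M = (X - 1 + 1) ^ M := by ring
    rw [this, add_pow]
    apply Finset.sum_congr rfl
    intro i hi
    simp only [Nat.sub_zero, one_pow, mul_one, Nat.mul_zero]
    rw [div_self (by exact_mod_cast (dfact_pos N).ne'),
      div_self (by exact_mod_cast (dfact_pos (N - i)).ne'), mul_one, mul_one,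
      Polynomial.C_eq_natCast, mul_comm]
  | succ t ih =>
    intro ht
    have ht' : 2 * t + M ≤ N := by omega
    rw [h3 t ht, ih ht', Polynomial.derivative_sum]
    simp only [Polynomial.derivative_C_mul]
    rw [Finset.mul_sum, ← Finset.sum_sub_distrib]
    apply Finset.sum_congr rfl
    intro i hi
    have hi' : i ≤ M := by simpa [Nat.lt_succ_iff] using hi
    have heig := h1 i t
    calc Polynomial.C ((M.choose i : ℚ) * ((dfact (N - 2 * t) : ℚ) / (dfact N : ℚ)) *
          ((dfact (N - i) : ℚ) / (dfact (N - 2 * t - i) : ℚ))) * (X - 1) ^ i -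
        Polynomial.C (1 / ((N : ℚ) - 2 * t)) * (X - 1) *
          (Polynomial.C ((M.choose i : ℚ) * ((dfact (N - 2 * t) : ℚ) / (dfact N : ℚ)) *
          ((dfact (N - i) : ℚ) / (dfact (N - 2 * t - i) : ℚ))) *
            Polynomial.derivative ((X - 1) ^ i))
        = Polynomial.C ((M.choose i : ℚ) * ((dfact (N - 2 * t) : ℚ) / (dfact N : ℚ)) *
          ((dfact (N - i) : ℚ) / (dfact (N - 2 * t - i) : ℚ))) *
          ((X - 1) ^ i - Polynomial.C (1 / ((N : ℚ) - 2 * t)) * (X - 1) *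
            Polynomial.derivative ((X - 1) ^ i)) := by ring
      _ = Polynomial.C ((M.choose i : ℚ) * ((dfact (N - 2 * t) : ℚ) / (dfact N : ℚ)) *
          ((dfact (N - i) : ℚ) / (dfact (N - 2 * t - i) : ℚ)) *
          (1 - (i : ℚ) / ((N : ℚ) - 2 * t))) * (X - 1) ^ i := by
          rw [heig, ← mul_assoc, ← map_mul]
      _ = _ := by
          congr 1
          congr 1
          -- scalar identity
          have hNt : N - 2 * t = (N - 2 * (t + 1)) + 2 := by omega
          have hNti : N - 2 * t - i = (N - 2 * (t + 1) - i) + 2 := by omega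
          have hc1 : ((N - 2 * t : ℕ) : ℚ) = (N : ℚ) - 2 * t := by
            rw [Nat.cast_sub (by omega : 2 * t ≤ N)]; push_cast; ring
          have hc2 : ((N - 2 * t - i : ℕ) : ℚ) = (N : ℚ) - 2 * t - i := by
            rw [Nat.sub_sub, Nat.cast_sub (by omega : 2 * t + i ≤ N)]
            push_cast; ring
          have hs : ((N : ℚ) - 2 * t) ≠ 0 := by
            rw [← hc1]; exact_mod_cast (by omega : N - 2 * t ≠ 0)
          have hd1 : (dfact (N - 2 * t) : ℚ) = ((N : ℚ) - 2 * t) * dfact (N - 2 * (t + 1)) := by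
            rw [hNt, dfact]; push_cast; rw [← hc1, hNt]; push_cast; ring
          have hd2 : (dfact (N - 2 * t - i) : ℚ) =
              ((N : ℚ) - 2 * t - i) * dfact (N - 2 * (t + 1) - i) := by
            rw [hNti, dfact]; push_cast; rw [← hc2, hNti]; push_cast; ring
          rw [hd1, hd2]
          have hz1 : (dfact N : ℚ) ≠ 0 := by exact_mod_cast (dfact_pos N).ne'
          have hz2 : (dfact (N - 2 * (t + 1) - i) : ℚ) ≠ 0 := by
            exact_mod_cast (dfact_pos _).ne'
          have hz3 : ((N : ℚ) - 2 * t - i) ≠ 0 := by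
            rw [← hc2]; exact_mod_cast (by omega : N - 2 * t - i ≠ 0)
          field_simp
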